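/- In the layered hop-reduction graph H built from h+1 copies of the nonnegative part G⁺ of G — with layers V_0,…,V_h, a copy (u_i, v_{i+1}) of each negative arc (u,v) from each layer i < h to layer i+1, and zero-length self-arcs (u_i, u_{(i+1) mod (h+1)}) — the potential φ(v_i) = d^i(V,v) (the minimum i-hop distance from any vertex to v in G) neutralizes every arc of H except possibly the self-arcs (u_h, u_0) wrapping from layer h back to layer 0. -/

import Mathlib

open Classical

variable {V : Type*}

/-- `IsWalk E s t p`: `p` is the list of successive vertices (after `s`) of a walk
from `s` to `t` in the directed graph with edge relation `E`. -/
def IsWalk (E : V → V → Prop) : V → V → List V → Prop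
  | s, t, [] => s = t
  | s, t, v :: p => E s v ∧ IsWalk E v t p

/-- Length of a walk: sum of edge lengths. -/
noncomputable def walkLen (ℓ : V → V → ℝ) : V → List V → ℝ
  | _, [] => 0
  | s, v :: p => ℓ s v + walkLen ℓ v p

/-- Number of hops of a walk: number of designated (negative) edges, with multiplicity. -/
noncomputable def hopCount (neg : V → V → Prop) : V → List V → ℕ
  | _, [] => 0
  | s, v :: p => (if neg s v then 1 else 0) + hopCount neg v p

/-- `h`-hop distance: infimum length over walks from `s` to `t` with at most `h` hops. -/
noncomputable def hopDist (E : V → V → Prop) (ℓ : V → V → ℝ) (neg : V → V → Prop)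
    (h : ℕ) (s t : V) : EReal :=
  ⨅ p ∈ {p : List V | IsWalk E s t p ∧ hopCount neg s p ≤ h}, (walkLen ℓ s p : EReal)

/-- Distance: infimum length over all walks from `s` to `t`. -/
noncomputable def walkDist (E : V → V → Prop) (ℓ : V → V → ℝ) (s t : V) : EReal :=
  ⨅ p ∈ {p : List V | IsWalk E s t p}, (walkLen ℓ s p : EReal)

section Aux

variable {V : Type*}

lemma isWalk_append {E : V → V → Prop} :
    ∀ (p : List V) (s u v : V), IsWalk E s u p → E u v → IsWalk E s v (p ++ [v])
  | [], s, u, v, hw, he => by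
      cases hw; exact ⟨he, rfl⟩
  | w :: p, s, u, v, hw, he => ⟨hw.1, isWalk_append p w u v hw.2 he⟩

lemma walkLen_append {E : V → V → Prop} (ℓ : V → V → ℝ) :
    ∀ (p : List V) (s u v : V), IsWalk E s u p →
      walkLen ℓ s (p ++ [v]) = walkLen ℓ s p + ℓ u v
  | [], s, u, v, hw => by cases hw; simp [walkLen]
  | w :: p, s, u, v, hw => by
      show ℓ s w + walkLen ℓ w (p ++ [v]) = ℓ s w + walkLen ℓ w p + ℓ u v
      rw [walkLen_append ℓ p w u v hw.2]; ring

lemma hopCount_append {E : V → V → Prop} (neg : V → V → Prop) :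
    ∀ (p : List V) (s u v : V), IsWalk E s u p →
      hopCount neg s (p ++ [v]) = hopCount neg s p + (if neg u v then 1 else 0)
  | [], s, u, v, hw => by cases hw; simp [hopCount]
  | w :: p, s, u, v, hw => by
      show (if neg s w then 1 else 0) + hopCount neg w (p ++ [v]) = _
      rw [hopCount_append neg p w u v hw.2, hopCount]; ring

lemma ereal_add_sub (x : EReal) (c : ℝ) : x + (c : EReal) + ((-c : ℝ) : EReal) = x := by
  induction x using EReal.rec with
  | bot => simp
  | coe r => norm_cast; ring
  | top => simp

lemma ereal_iInf_add {ι : Sort*} (f : ι → EReal) (c : ℝ) :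
    (⨅ i, f i) + (c : EReal) = ⨅ i, f i + (c : EReal) := by
  apply le_antisymm
  · exact le_iInf fun i => add_le_add_left (iInf_le f i) _
  · have h1 : (⨅ i, f i + (c : EReal)) + ((-c : ℝ) : EReal) ≤ ⨅ i, f i := by
      refine le_iInf fun i => ?_
      calc (⨅ i, f i + (c : EReal)) + ((-c : ℝ) : EReal)
          ≤ f i + (c : EReal) + ((-c : ℝ) : EReal) :=
            add_le_add_left (iInf_le _ i) _
        _ = f i := ereal_add_sub _ _
    calc (⨅ i, f i + (c : EReal))
        = (⨅ i, f i + (c : EReal)) + ((-c : ℝ) : EReal) + (c : EReal) := by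
          rw [show ((c : ℝ) : EReal) = ((-(-c) : ℝ) : EReal) by norm_num,
            ereal_add_sub]
      _ ≤ (⨅ i, f i) + (c : EReal) := add_le_add_left h1 _

/-- Key step: extending walks by one edge. -/
lemma hopDist_step {E : V → V → Prop} {ℓ : V → V → ℝ} {neg : V → V → Prop}
    {i j : ℕ} {u v : V} (he : E u v)
    (hij : ∀ k : ℕ, k ≤ i → k + (if neg u v then 1 else 0) ≤ j) (s : V) :
    hopDist E ℓ neg j s v ≤ hopDist E ℓ neg i s u + (ℓ u v : EReal) := by
  unfold hopDist
  rw [iInf_subtype', iInf_subtype', ereal_iInf_add]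
  refine le_iInf fun ⟨p, hw, hc⟩ => ?_
  refine iInf_le_of_le ⟨p ++ [v], isWalk_append p s u v hw he, ?_⟩ ?_
  · rw [hopCount_append neg p s u v hw]; exact hij _ hc
  · rw [walkLen_append ℓ p s u v hw]; norm_cast

lemma D_step {E : V → V → Prop} {ℓ : V → V → ℝ} {D : ℕ → V → ℝ}
    (hD : ∀ (i : ℕ) (v : V),
      (⨅ u : V, hopDist E ℓ (fun a b => ℓ a b < 0) i u v) = (D i v : EReal))
    {i j : ℕ} {u v : V} (he : E u v)
    (hij : ∀ k : ℕ, k ≤ i → k + (if ℓ u v < 0 then 1 else 0) ≤ j) :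
    D j v ≤ D i u + ℓ u v := by
  by_contra hlt
  push_neg at hlt
  have h1 : (⨅ s : V, hopDist E ℓ (fun a b => ℓ a b < 0) i s u)
      < ((D j v - ℓ u v : ℝ) : EReal) := by
    rw [hD]; exact_mod_cast by linarith
  obtain ⟨s, hs⟩ := iInf_lt_iff.mp h1
  have h2 : hopDist E ℓ (fun a b => ℓ a b < 0) j s v < (D j v : EReal) := by
    calc hopDist E ℓ (fun a b => ℓ a b < 0) j s v
        ≤ hopDist E ℓ (fun a b => ℓ a b < 0) i s u + (ℓ u v : EReal) :=
          hopDist_step he hij s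
      _ < ((D j v - ℓ u v : ℝ) : EReal) + (ℓ u v : EReal) :=
          EReal.add_lt_add_right_coe hs _
      _ = (D j v : EReal) := by norm_cast; ring
  have h3 : (D j v : EReal) ≤ hopDist E ℓ (fun a b => ℓ a b < 0) j s v := by
    rw [← hD j v]; exact iInf_le _ s
  exact absurd (h3.trans_lt h2) (lt_irrefl _)

lemma hopDist_mono {E : V → V → Prop} {ℓ : V → V → ℝ} {neg : V → V → Prop}
    {i j : ℕ} (hij : i ≤ j) (s t : V) :
    hopDist E ℓ neg j s t ≤ hopDist E ℓ neg i s t := by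
  refine le_iInf₂ fun p ⟨hw, hc⟩ => iInf₂_le p ⟨hw, hc.trans hij⟩

end Aux

/-- In the layered hop-reduction graph built from `h+1` copies of `G⁺`, the potential
`φ(v_i) = d^i(V,v)` (with real values `D i v`) neutralizes every arc except possibly
the self-arcs wrapping from layer `h` back to layer `0`: (1) each copy of a
nonnegative arc, (2) each copy `(u_i, v_{i+1})` of a negative arc, and (3) each
self-arc `(u_i, u_{i+1})` with `i < h`, is neutralized. -/
theorem layered_graph_potentials_neutralize
    {V : Type*} (E : V → V → Prop) (ℓ : V → V → ℝ) (h : ℕ) (D : ℕ → V → ℝ)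
    (hD : ∀ (i : ℕ) (v : V),
      (⨅ u : V, hopDist E ℓ (fun a b => ℓ a b < 0) i u v) = (D i v : EReal)) :
    (∀ i ≤ h, ∀ u v, E u v → 0 ≤ ℓ u v → 0 ≤ ℓ u v + D i u - D i v) ∧
    (∀ i < h, ∀ u v, E u v → ℓ u v < 0 → 0 ≤ ℓ u v + D i u - D (i + 1) v) ∧
    (∀ i < h, ∀ u : V, 0 ≤ 0 + D i u - D (i + 1) u) := by
  refine ⟨?_, ?_, ?_⟩
  · intro i _ u v he hnn
    have := D_step hD he (i := i) (j := i) (u := u) (v := v)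
      (fun k hk => by simp [not_lt.mpr hnn]; omega)
    linarith
  · intro i _ u v he hneg
    have := D_step hD he (i := i) (j := i + 1) (u := u) (v := v)
      (fun k hk => by simp [hneg]; omega)
    linarith
  · intro i _ u
    have h1 : (⨅ s : V, hopDist E ℓ (fun a b => ℓ a b < 0) (i + 1) s u)
        ≤ (⨅ s : V, hopDist E ℓ (fun a b => ℓ a b < 0) i s u) :=
      iInf_mono fun s => hopDist_mono (Nat.le_succ i) s u
    rw [hD, hD] at h1
    have := EReal.coe_le_coe_iff.mp h1
    linarith
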